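/- Let π be a finitely generated group. If the representation variety R(π) = Hom(π, SL(2,ℂ)) has Krull dimension 0, then every representation ρ : π → SL(2,ℂ) is reducible (i.e., R(π) contains no irreducible representation). -/

import Mathlib

/-- A subset of `σ → ℂ` is an affine algebraic variety if it is the zero locus of an ideal of
polynomials. -/
def IsAffineVariety {σ : Type} (s : Set (σ → ℂ)) : Prop :=
  ∃ I : Ideal (MvPolynomial σ ℂ), s = MvPolynomial.zeroLocus ℂ I

/-- An affine variety is irreducible if it is nonempty and is not the union of two strictly
smaller subvarieties. -/
def IsIrredVariety {σ : Type} (s : Set (σ → ℂ)) : Prop :=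
  IsAffineVariety s ∧ s.Nonempty ∧
    ∀ t u : Set (σ → ℂ), IsAffineVariety t → IsAffineVariety u →
      s = t ∪ u → s = t ∨ s = u

/-- The Krull dimension of a set `V ⊆ ℂ^σ`: the supremum of lengths of strictly increasing
chains of irreducible closed subvarieties contained in `V`. -/
noncomputable def varietyDim {σ : Type} (V : Set (σ → ℂ)) : WithBot ℕ∞ :=
  Order.krullDim {s : Set (σ → ℂ) // IsIrredVariety s ∧ s ⊆ V}

/-- A representation `ρ : π → SL(2,ℂ)` is irreducible if its image preserves no
one-dimensional subspace of `ℂ²`. -/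
def IsIrrRep {π : Type*} [Group π] (ρ : π →* Matrix.SpecialLinearGroup (Fin 2) ℂ) : Prop :=
  ¬ ∃ L : Submodule ℂ (Fin 2 → ℂ), Module.finrank ℂ L = 1 ∧
      ∀ γ : π, L.map (Matrix.mulVecLin (ρ γ : Matrix (Fin 2) (Fin 2) ℂ)) = L

/-- The coordinates of a representation in `ℂ^{4n}` given by the matrix entries of the images
of a chosen tuple of generators. -/
def repCoords {π : Type*} [Group π] {n : ℕ} (g : Fin n → π)
    (ρ : π →* Matrix.SpecialLinearGroup (Fin 2) ℂ) : Fin n × Fin 2 × Fin 2 → ℂ :=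
  fun p => (ρ (g p.1) : Matrix (Fin 2) (Fin 2) ℂ) p.2.1 p.2.2

/-!
An irreducible `ρ` cannot fix the line `ℂ e₁`, so some generator has nonzero lower-left entry
`c`. Conjugating `ρ` by `u(s) = [[1, s], [0, 1]]` gives representations whose coordinates are
polynomials in `s`, and the `(0,0)` entry of the conjugated generator is `a + s c`, from which
`s` is recovered polynomially. Hence `s ↦ u(s) ρ u(s)⁻¹` is a closed embedding of the line into
`R(π)`: an irreducible curve strictly containing a point, so `dim R(π) ≥ 1`.
-/

open scoped MatrixGroups Pointwise

section Varieties

open MvPolynomial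

variable {σ : Type}

lemma isIrredVariety_of_subset_or_subset {s : Set (σ → ℂ)} (hs : IsAffineVariety s)
    (hne : s.Nonempty)
    (h : ∀ t u, IsAffineVariety t → IsAffineVariety u → s = t ∪ u → s ⊆ t ∨ s ⊆ u) :
    IsIrredVariety s := by
  refine ⟨hs, hne, fun t u ht hu hstu => ?_⟩
  rcases h t u ht hu hstu with hst | hsu
  · exact .inl (hst.antisymm (hstu ▸ Set.subset_union_left))
  · exact .inr (hsu.antisymm (hstu ▸ Set.subset_union_right))

lemma isIrredVariety_singleton (x : σ → ℂ) : IsIrredVariety {x} := by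
  refine isIrredVariety_of_subset_or_subset
    ⟨Ideal.span (Set.range fun j => X j - C (x j)), ?_⟩ (Set.singleton_nonempty x) ?_
  · ext y
    simp [zeroLocus_span, sub_eq_zero, funext_iff]
  · intro t u _ _ h
    simpa only [Set.singleton_subset_iff, ← Set.mem_union, ← h] using Set.mem_singleton x

def polynomialCurve (p : σ → Polynomial ℂ) (s : ℂ) : σ → ℂ := fun j => (p j).eval s

lemma aeval_polynomialCurve (p : σ → Polynomial ℂ) (s : ℂ) (f : MvPolynomial σ ℂ) :
    aeval (polynomialCurve p s) f = (aeval p f).eval s := by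
  rw [← Polynomial.coe_aeval_eq_eval, comp_aeval_apply]
  rfl

lemma polynomialCurve_injective {p : σ → Polynomial ℂ} {q : MvPolynomial σ ℂ}
    (hq : ∀ s, aeval (polynomialCurve p s) q = s) : Function.Injective (polynomialCurve p) :=
  fun s t h => by rw [← hq s, h, hq t]

/-- The retraction `q` cuts the curve out by the equations `x j = p j (q x)`. -/
lemma isIrredVariety_range_polynomialCurve {p : σ → Polynomial ℂ} {q : MvPolynomial σ ℂ}
    (hq : ∀ s, aeval (polynomialCurve p s) q = s) :
    IsIrredVariety (Set.range (polynomialCurve p)) := by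
  refine isIrredVariety_of_subset_or_subset
    ⟨Ideal.span (Set.range fun j => X j - Polynomial.aeval q (p j)), ?_⟩
    (Set.range_nonempty _) ?_
  · ext x
    simp only [zeroLocus_span, Set.forall_mem_range, map_sub, aeval_X,
      ← Polynomial.aeval_algHom_apply, sub_eq_zero, Polynomial.coe_aeval_eq_eval]
    constructor
    · rintro ⟨s, rfl⟩ j
      rw [hq]
      rfl
    · intro hx
      exact ⟨aeval x q, funext fun j => (hx j).symm⟩
  · rintro t u ⟨I, rfl⟩ ⟨J, rfl⟩ h
    simp only [Set.range_subset_iff, mem_zeroLocus_iff, aeval_polynomialCurve]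
    by_contra! ⟨⟨s, f, hfI, hf⟩, ⟨t, e, heJ, he⟩⟩
    -- the product of the pulled-back polynomials vanishes on all of the infinite field `ℂ`
    have hfe : aeval p f * aeval p e = 0 := Polynomial.funext fun r => by
      have hr : polynomialCurve p r ∈ zeroLocus ℂ I ∪ zeroLocus ℂ J :=
        h ▸ Set.mem_range_self r
      rcases hr with hr | hr
      · simp [← aeval_polynomialCurve, hr f hfI]
      · simp [← aeval_polynomialCurve, hr e heJ]
    rcases mul_eq_zero.1 hfe with h0 | h0
    · exact hf (by rw [h0, Polynomial.eval_zero])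
    · exact he (by rw [h0, Polynomial.eval_zero])

lemma one_le_varietyDim_of_polynomialCurve {V : Set (σ → ℂ)} {p : σ → Polynomial ℂ}
    {q : MvPolynomial σ ℂ} (hq : ∀ s, aeval (polynomialCurve p s) q = s)
    (hV : ∀ s, polynomialCurve p s ∈ V) : 1 ≤ varietyDim V := by
  have hpt : {polynomialCurve p 0} ⊆ Set.range (polynomialCurve p) :=
    Set.singleton_subset_iff.2 (Set.mem_range_self 0)
  rw [varietyDim, Order.one_le_krullDim_iff]
  refine ⟨⟨_, isIrredVariety_singleton _, Set.singleton_subset_iff.2 (hV 0)⟩,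
    ⟨_, isIrredVariety_range_polynomialCurve hq, Set.range_subset_iff.2 hV⟩, ?_⟩
  rw [Subtype.mk_lt_mk, Set.ssubset_iff_of_subset hpt]
  exact ⟨_, Set.mem_range_self 1, fun h => one_ne_zero (polynomialCurve_injective hq h)⟩

end Varieties

section SL2

variable {R : Type*} [CommRing R]

lemma map_mulVecLin_span_single_of_lowerLeft_eq_zero (A : SL(2, R)) (hA : A 1 0 = 0) :
    (R ∙ Pi.single 0 1).map (A : Matrix (Fin 2) (Fin 2) R).mulVecLin = R ∙ Pi.single 0 1 := by
  have hdet : A 0 0 * A 1 1 = 1 := by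
    simpa only [Matrix.det_fin_two, hA, mul_zero, sub_zero] using A.det_coe
  have hcol : (A : Matrix (Fin 2) (Fin 2) R).mulVecLin (Pi.single 0 1) =
      A 0 0 • Pi.single 0 1 := by
    ext k
    fin_cases k <;> simp [hA]
  rw [Submodule.map_span, Set.image_singleton, hcol,
    Submodule.span_singleton_smul_eq (IsUnit.of_mul_eq_one _ hdet)]

def upperUnipotent (s : R) : SL(2, R) :=
  ⟨!![1, s; 0, 1], by simp [Matrix.det_fin_two_of]⟩

@[simp]
lemma coe_upperUnipotent (s : R) :
    (upperUnipotent s : Matrix (Fin 2) (Fin 2) R) = !![1, s; 0, 1] :=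
  rfl

lemma conj_upperUnipotent_apply_zero_zero (s : R) (A : SL(2, R)) :
    (upperUnipotent s * A * (upperUnipotent s)⁻¹) 0 0 = A 0 0 + s * A 1 0 := by
  simp [Matrix.SpecialLinearGroup.coe_inv, Matrix.adjugate_fin_two_of, Matrix.mul_apply,
    Matrix.vecMul, dotProduct, Fin.sum_univ_two]

open Polynomial in
noncomputable def conjUpperUnipotentPoly (A : SL(2, R)) : SL(2, R[X]) :=
  upperUnipotent X * Matrix.SpecialLinearGroup.map C A * (upperUnipotent X)⁻¹

open Polynomial Matrix.SpecialLinearGroup in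
lemma eval_conjUpperUnipotentPoly_apply (s : R) (A : SL(2, R)) (k l : Fin 2) :
    (conjUpperUnipotentPoly A k l).eval s =
      (upperUnipotent s * A * (upperUnipotent s)⁻¹) k l := by
  have hU : map (evalRingHom s) (upperUnipotent X) = upperUnipotent s := by
    ext i j
    fin_cases i <;> fin_cases j <;> simp
  have hA : map (evalRingHom s) (map C A) = A := by
    ext i j
    simp
  have hconj : map (evalRingHom s) (conjUpperUnipotentPoly A) =
      upperUnipotent s * A * (upperUnipotent s)⁻¹ := by
    simp only [conjUpperUnipotentPoly, map_mul, map_inv, hU, hA]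
  simp [← hconj]

end SL2

section Representations

variable {π : Type*} [Group π]

lemma map_mulVecLin_eq_of_closure_eq_top {ι R : Type*} [Fintype ι] [DecidableEq ι]
    [CommRing R] {S : Set π} (hS : Subgroup.closure S = ⊤)
    (ρ : π →* Matrix.SpecialLinearGroup ι R) {L : Submodule R (ι → R)}
    (hL : ∀ γ ∈ S, L.map (ρ γ : Matrix ι ι R).mulVecLin = L) (γ : π) :
    L.map (ρ γ : Matrix ι ι R).mulVecLin = L := by
  -- `A • L` for the pointwise action of `SL` on submodules is `L.map A.mulVecLin` by definition
  have hle : Subgroup.closure S ≤ (MulAction.stabilizer _ L).comap ρ :=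
    (Subgroup.closure_le _).2 hL
  exact hle (hS ▸ Subgroup.mem_top γ)

lemma exists_lowerLeft_ne_zero_of_isIrrRep {n : ℕ} {g : Fin n → π}
    (hg : Subgroup.closure (Set.range g) = ⊤) {ρ : π →* SL(2, ℂ)} (hρ : IsIrrRep ρ) :
    ∃ i, ρ (g i) 1 0 ≠ 0 := by
  by_contra! h
  refine hρ ⟨ℂ ∙ Pi.single 0 1, finrank_span_singleton (by simp), ?_⟩
  exact map_mulVecLin_eq_of_closure_eq_top hg ρ <| Set.forall_mem_range.2 fun i =>
    map_mulVecLin_span_single_of_lowerLeft_eq_zero _ (h i)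

lemma one_le_varietyDim_of_lowerLeft_ne_zero {n : ℕ} (g : Fin n → π) (ρ : π →* SL(2, ℂ))
    {i : Fin n} (hi : ρ (g i) 1 0 ≠ 0) : 1 ≤ varietyDim (Set.range (repCoords g)) := by
  set p : Fin n × Fin 2 × Fin 2 → Polynomial ℂ :=
    fun j => conjUpperUnipotentPoly (ρ (g j.1)) j.2.1 j.2.2
  have hcurve : ∀ s, polynomialCurve p s =
      repCoords g ((MulAut.conj (upperUnipotent s)).toMonoidHom.comp ρ) := by
    intro s
    ext ⟨j, k, l⟩
    simp [polynomialCurve, repCoords, p, eval_conjUpperUnipotentPoly_apply]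
  refine one_le_varietyDim_of_polynomialCurve
    (q := (.X (i, 0, 0) - .C (ρ (g i) 0 0)) * .C (ρ (g i) 1 0)⁻¹) (fun s => ?_)
    (fun s => by rw [hcurve]; exact Set.mem_range_self _)
  simp [hcurve, repCoords, conj_upperUnipotent_apply_zero_zero, hi]

end Representations

/-- If the `SL(2,ℂ)`-representation variety of a finitely generated group `π` (embedded in
`ℂ^{4n}` via a generating `n`-tuple) has Krull dimension `0`, then every representation
`π → SL(2,ℂ)` is reducible. -/
theorem stmt12 {π : Type*} [Group π] {n : ℕ} (g : Fin n → π)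
    (hg : Subgroup.closure (Set.range g) = ⊤)
    (hdim : varietyDim (Set.range (repCoords g)) = 0) :
    ∀ ρ : π →* Matrix.SpecialLinearGroup (Fin 2) ℂ, ¬ IsIrrRep ρ := by
  intro ρ hρ
  obtain ⟨i, hi⟩ := exists_lowerLeft_ne_zero_of_isIrrRep hg hρ
  have h := one_le_varietyDim_of_lowerLeft_ne_zero g ρ hi
  rw [hdim] at h
  exact absurd h (by decide)
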